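/- For every p×q real matrix W and every b ∈ ℝ^p, the map h : G_q → G_p defined by h(Υ) = (Υ₁, W·Υ₂ + (1 − e^{−Υ₁})·b) is a group homomorphism: h(Ψ * Υ) = h(Ψ) * h(Υ) for all Ψ, Υ ∈ G_q. -/

import Mathlib

/-! The first coordinate is the identity, and the second is an affine map `y ↦ L y + (1 − a)·b`
with `L = W` linear and `a = e^{−Υ₁}`. Since `e^{−(Υ₁+Ψ₁)} = e^{−Υ₁} e^{−Ψ₁}`, the claim reduces to
the identity `L (y + a·x) + (1 − a c)·b = (L y + (1 − a)·b) + a·(L x + (1 − c)·b)`, valid for every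
linear map `L` and all scalars `a`, `c`. -/

/-- The solvable group operation on `ℝ × ℝ^n`:
`Ψ * Υ = (Υ₁ + Ψ₁, Υ₂ + e^{−Υ₁}·Ψ₂)`. -/
noncomputable def gmul {n : ℕ} (Ψ Υ : ℝ × EuclideanSpace ℝ (Fin n)) :
    ℝ × EuclideanSpace ℝ (Fin n) :=
  (Υ.1 + Ψ.1, Υ.2 + Real.exp (-Υ.1) • Ψ.2)

/-- Matrix–vector multiplication `W·x` on Euclidean spaces. -/
noncomputable def mulVecE {p q : ℕ} (W : Matrix (Fin p) (Fin q) ℝ)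
    (x : EuclideanSpace ℝ (Fin q)) : EuclideanSpace ℝ (Fin p) :=
  WithLp.toLp 2 (fun i => ∑ j, W i j * x j)

theorem mulVecE_eq_toEuclideanLin {p q : ℕ} (W : Matrix (Fin p) (Fin q) ℝ)
    (x : EuclideanSpace ℝ (Fin q)) : mulVecE W x = Matrix.toEuclideanLin W x :=
  rfl

theorem LinearMap.map_add_smul_add_one_sub_mul_smul {R M N : Type*} [CommRing R]
    [AddCommGroup M] [Module R M] [AddCommGroup N] [Module R N] (L : M →ₗ[R] N) (b : N)
    (x y : M) (a c : R) :
    L (y + a • x) + (1 - a * c) • b = (L y + (1 - a) • b) + a • (L x + (1 - c) • b) := by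
  simp only [map_add, map_smul]
  module

theorem stmt_3_general (p q : ℕ)
    (W : Matrix (Fin p) (Fin q) ℝ) (b : EuclideanSpace ℝ (Fin p)) :
    ∀ Ψ Υ : ℝ × EuclideanSpace ℝ (Fin q),
      (fun Υ : ℝ × EuclideanSpace ℝ (Fin q) =>
          ((Υ.1, mulVecE W Υ.2 + (1 - Real.exp (-Υ.1)) • b) :
            ℝ × EuclideanSpace ℝ (Fin p))) (gmul Ψ Υ)
        = gmul ((Ψ.1, mulVecE W Ψ.2 + (1 - Real.exp (-Ψ.1)) • b))
            ((Υ.1, mulVecE W Υ.2 + (1 - Real.exp (-Υ.1)) • b)) := by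
  intro Ψ Υ
  refine Prod.ext rfl ?_
  simp only [gmul, mulVecE_eq_toEuclideanLin, neg_add, Real.exp_add]
  exact (Matrix.toEuclideanLin W).map_add_smul_add_one_sub_mul_smul b _ _ _ _

/-- For every `p×q` real matrix `W` and every `b ∈ ℝ^p`, the map
`h(Υ) = (Υ₁, W·Υ₂ + (1 − e^{−Υ₁})·b)` is a group homomorphism from `G_q` to `G_p`. -/
theorem stmt_3 (p q : ℕ) (hp : 1 ≤ p) (hq : 1 ≤ q)
    (W : Matrix (Fin p) (Fin q) ℝ) (b : EuclideanSpace ℝ (Fin p)) :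
    ∀ Ψ Υ : ℝ × EuclideanSpace ℝ (Fin q),
      (fun Υ : ℝ × EuclideanSpace ℝ (Fin q) =>
          ((Υ.1, mulVecE W Υ.2 + (1 - Real.exp (-Υ.1)) • b) :
            ℝ × EuclideanSpace ℝ (Fin p))) (gmul Ψ Υ)
        = gmul ((Ψ.1, mulVecE W Ψ.2 + (1 - Real.exp (-Ψ.1)) • b))
            ((Υ.1, mulVecE W Υ.2 + (1 - Real.exp (-Υ.1)) • b)) :=
  stmt_3_general p q W b
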